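/- arXiv:math/0506605 — 2 statements merged into one kernel-verified Lean document; each statement's English description precedes it below -/
import Mathlib

section
/- For all f, g ∈ C^∞(ℂⁿ), all scalars α ∈ ℂ, and all parameters m ∈ ℕ, 0 ≤ ℓ ≤ 2^m−1, R, S ∈ ℕⁿ, the quantities ‖·‖^{p,ℏ}_{m,ℓ,R,S} satisfy (as identities/inequalities in [0,∞]): (i) ‖α·f‖^{p,ℏ}_{m,ℓ,R,S} = |α|·‖f‖^{p,ℏ}_{m,ℓ,R,S}, and (ii) ‖f+g‖^{p,ℏ}_{m,ℓ,R,S} ≤ ‖f‖^{p,ℏ}_{m,ℓ,R,S} + ‖g‖^{p,ℏ}_{m,ℓ,R,S}. -/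
open scoped ENNReal NNReal BigOperators
open Complex

noncomputable section

namespace WickPaper

/-- functions on ℂⁿ -/
abbrev Fn (n : ℕ) := (Fin n → ℂ) → ℂ

/-- |N| = N₁+⋯+Nₙ -/
def mAbs {n : ℕ} (N : Fin n → ℕ) : ℕ := ∑ i, N i

/-- N! = N₁!⋯Nₙ! -/
def mFact {n : ℕ} (N : Fin n → ℕ) : ℕ := ∏ i, Nat.factorial (N i)

/-- componentwise binomial coefficient -/
def mChoose {n : ℕ} (R I : Fin n → ℕ) : ℕ := ∏ i, Nat.choose (R i) (I i)

/-- Wirtinger derivative ∂/∂zᵢ -/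
def wderivZ {n : ℕ} (i : Fin n) (f : Fn n) : Fn n :=
  fun z => (1/2 : ℂ) *
    (fderiv ℝ f z (Pi.single i 1) - Complex.I * fderiv ℝ f z (Pi.single i Complex.I))

/-- Wirtinger derivative ∂/∂z̄ᵢ -/
def wderivZbar {n : ℕ} (i : Fin n) (f : Fn n) : Fn n :=
  fun z => (1/2 : ℂ) *
    (fderiv ℝ f z (Pi.single i 1) + Complex.I * fderiv ℝ f z (Pi.single i Complex.I))

/-- ∂^{|R|}/∂z^R -/
def wIterZ {n : ℕ} (R : Fin n → ℕ) (f : Fn n) : Fn n :=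
  (List.finRange n).foldr (fun i g => (wderivZ i)^[R i] g) f

/-- ∂^{|S|}/∂z̄^S -/
def wIterZbar {n : ℕ} (S : Fin n → ℕ) (f : Fn n) : Fn n :=
  (List.finRange n).foldr (fun i g => (wderivZbar i)^[S i] g) f

/-- iterated Wirtinger derivative ∂^{|R|+|S|} f/(∂z^R ∂z̄^S) -/
def wD {n : ℕ} (R S : Fin n → ℕ) (f : Fn n) : Fn n :=
  wIterZ R (wIterZbar S f)

/-- the base quantity h^{p,ℏ}_{0,0,R,S}(f) -/
def h0 {n : ℕ} (p : Fin n → ℂ) (ℏ : ℝ) (R S : Fin n → ℕ) (f : Fn n) : ℝ≥0∞ :=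
  ∑' N : Fin n → ℕ,
    ENNReal.ofReal ((2*ℏ)^(mAbs R + mAbs S + mAbs N)) / (mFact N : ℝ≥0∞) *
      (‖wD R (N + S) f p‖₊ : ℝ≥0∞)^2

/-- the recursively defined quantities h^{p,ℏ}_{m,ℓ,R,S}(f) ∈ [0,∞] -/
def hSem {n : ℕ} (p : Fin n → ℂ) (ℏ : ℝ) : ℕ → ℕ → (Fin n → ℕ) → (Fin n → ℕ) → Fn n → ℝ≥0∞
  | 0, _, R, S, f => h0 p ℏ R S f
  | (m+1), ℓ, R, S, f =>
    if ℓ % 2 = 0 then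
      ∑' N : Fin n → ℕ, (mFact N : ℝ≥0∞)⁻¹ *
        (∑ I ∈ Finset.Iic R, ∑ J ∈ Finset.Iic (N + S),
          ((mChoose R I * mChoose (N + S) J : ℕ) : ℝ≥0∞) * hSem p ℏ m (ℓ / 2) I J f) ^ 2
    else
      ∑' N : Fin n → ℕ, (mFact N : ℝ≥0∞)⁻¹ *
        (∑ I ∈ Finset.Iic R, ∑ J ∈ Finset.Iic (N + S),
          ((mChoose R I * mChoose (N + S) J : ℕ) : ℝ≥0∞) * hSem p ℏ m ((ℓ - 1) / 2) J I f) ^ 2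

/-- the seminorm ‖f‖^{p,ℏ}_{m,ℓ,R,S} = (h^{p,ℏ}_{m,ℓ,R,S}(f))^{1/2^{m+1}} ∈ [0,∞] -/
def wNorm {n : ℕ} (p : Fin n → ℂ) (ℏ : ℝ) (m ℓ : ℕ) (R S : Fin n → ℕ) (f : Fn n) : ℝ≥0∞ :=
  hSem p ℏ m ℓ R S f ^ (((2:ℝ)^(m+1))⁻¹)

/-- Ã_{p,ℏ}: smooth functions all of whose seminorms are finite -/
def tA {n : ℕ} (p : Fin n → ℂ) (ℏ : ℝ) : Set (Fn n) :=
  {f | ContDiff ℝ (⊤ : ℕ∞) f ∧ ∀ (m ℓ : ℕ) (R S : Fin n → ℕ), ℓ < 2^m → wNorm p ℏ m ℓ R S f < ⊤}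

/-- a single term of the Wick product series -/
def wickTerm {n : ℕ} (α : ℂ) (N : Fin n → ℕ) (f g : Fn n) : Fn n :=
  fun z => (2*α)^(mAbs N) / (mFact N : ℂ) * wIterZ N f z * wIterZbar N g z

/-- the Wick product f ⋆_α g -/
def wick {n : ℕ} (α : ℂ) (f g : Fn n) : Fn n :=
  fun z => ∑' N : Fin n → ℕ, wickTerm α N f g z


section AuxLemmas

variable {n : ℕ}

/-- A derivation-like operator that preserves smoothness and is linear on smooth functions. -/
def Good (D : Fn n → Fn n) : Prop :=
  (∀ f : Fn n, ContDiff ℝ (⊤ : ℕ∞) f → ContDiff ℝ (⊤ : ℕ∞) (D f)) ∧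
  (∀ f g : Fn n, ContDiff ℝ (⊤ : ℕ∞) f → ContDiff ℝ (⊤ : ℕ∞) g →
    D (fun z => f z + g z) = (fun z => D f z + D g z)) ∧
  (∀ (α : ℂ) (f : Fn n), ContDiff ℝ (⊤ : ℕ∞) f →
    D (fun z => α * f z) = (fun z => α * D f z))

lemma good_wderivZ (i : Fin n) : Good (wderivZ i) := by
  refine ⟨?_, ?_, ?_⟩
  · intro f hf
    have h1 : ContDiff ℝ (⊤ : ℕ∞) (fun z => fderiv ℝ f z (Pi.single i 1)) :=
      (hf.fderiv_right (by simp)).clm_apply contDiff_const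
    have h2 : ContDiff ℝ (⊤ : ℕ∞) (fun z => fderiv ℝ f z (Pi.single i Complex.I)) :=
      (hf.fderiv_right (by simp)).clm_apply contDiff_const
    exact contDiff_const.mul (h1.sub (contDiff_const.mul h2))
  · intro f g hf hg
    funext z
    have := fderiv_fun_add (𝕜 := ℝ) (hf.differentiable (by simp)).differentiableAt
      (hg.differentiable (by simp)).differentiableAt (x := z)
    simp only [wderivZ, this, ContinuousLinearMap.add_apply]
    ring
  · intro α f hf
    funext z
    have := fderiv_const_mul (𝕜 := ℝ) ((hf.differentiable (by simp)).differentiableAt (x := z)) α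
    simp only [wderivZ, this, ContinuousLinearMap.smul_apply, smul_eq_mul]
    ring

lemma good_wderivZbar (i : Fin n) : Good (wderivZbar i) := by
  refine ⟨?_, ?_, ?_⟩
  · intro f hf
    have h1 : ContDiff ℝ (⊤ : ℕ∞) (fun z => fderiv ℝ f z (Pi.single i 1)) :=
      (hf.fderiv_right (by simp)).clm_apply contDiff_const
    have h2 : ContDiff ℝ (⊤ : ℕ∞) (fun z => fderiv ℝ f z (Pi.single i Complex.I)) :=
      (hf.fderiv_right (by simp)).clm_apply contDiff_const
    exact contDiff_const.mul (h1.add (contDiff_const.mul h2))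
  · intro f g hf hg
    funext z
    have := fderiv_fun_add (𝕜 := ℝ) (hf.differentiable (by simp)).differentiableAt
      (hg.differentiable (by simp)).differentiableAt (x := z)
    simp only [wderivZbar, this, ContinuousLinearMap.add_apply]
    ring
  · intro α f hf
    funext z
    have := fderiv_const_mul (𝕜 := ℝ) ((hf.differentiable (by simp)).differentiableAt (x := z)) α
    simp only [wderivZbar, this, ContinuousLinearMap.smul_apply, smul_eq_mul]
    ring

lemma good_id : Good (fun f : Fn n => f) :=
  ⟨fun _ hf => hf, fun _ _ _ _ => rfl, fun _ _ _ => rfl⟩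

lemma Good.comp {D E : Fn n → Fn n} (hD : Good D) (hE : Good E) :
    Good (fun f => D (E f)) := by
  obtain ⟨hD1, hD2, hD3⟩ := hD
  obtain ⟨hE1, hE2, hE3⟩ := hE
  refine ⟨fun f hf => hD1 _ (hE1 _ hf), ?_, ?_⟩
  · intro f g hf hg
    show D (E fun z => f z + g z) = _
    rw [hE2 f g hf hg, hD2 _ _ (hE1 _ hf) (hE1 _ hg)]
  · intro α f hf
    show D (E fun z => α * f z) = _
    rw [hE3 α f hf, hD3 α _ (hE1 _ hf)]

lemma Good.iterate {D : Fn n → Fn n} (hD : Good D) : ∀ k : ℕ, Good (D^[k])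
  | 0 => good_id
  | (k + 1) => by
      rw [Function.iterate_succ']
      exact hD.comp (hD.iterate k)

lemma good_foldr {ι : Type*} (F : ι → Fn n → Fn n) (h : ∀ i, Good (F i)) :
    ∀ l : List ι, Good (fun f => l.foldr F f)
  | [] => good_id
  | (i :: l) => (h i).comp (good_foldr F h l)

lemma good_wD (R S : Fin n → ℕ) : Good (wD R S) := by
  have h1 : Good (wIterZ (n := n) R) :=
    good_foldr _ (fun i => (good_wderivZ i).iterate (R i)) (List.finRange n)
  have h2 : Good (wIterZbar (n := n) S) :=
    good_foldr _ (fun i => (good_wderivZbar i).iterate (S i)) (List.finRange n)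
  exact h1.comp h2

lemma wD_add (R S : Fin n → ℕ) {f g : Fn n} (hf : ContDiff ℝ (⊤ : ℕ∞) f) (hg : ContDiff ℝ (⊤ : ℕ∞) g)
    (z : Fin n → ℂ) :
    wD R S (fun z => f z + g z) z = wD R S f z + wD R S g z :=
  congrFun ((good_wD R S).2.1 f g hf hg) z

lemma wD_smul (R S : Fin n → ℕ) (α : ℂ) {f : Fn n} (hf : ContDiff ℝ (⊤ : ℕ∞) f) (z : Fin n → ℂ) :
    wD R S (fun z => α * f z) z = α * wD R S f z :=
  congrFun ((good_wD R S).2.2 α f hf) z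


lemma tsum_Lp_add_le' {ι : Type*} (a b : ι → ℝ≥0∞) {q : ℝ} (hq : 1 ≤ q) :
    (∑' i, (a i + b i) ^ q) ^ q⁻¹ ≤ (∑' i, a i ^ q) ^ q⁻¹ + (∑' i, b i ^ q) ^ q⁻¹ := by
  have hq0 : (0:ℝ) < q := zero_lt_one.trans_le hq
  have key : (∑' i, (a i + b i) ^ q) ≤
      ((∑' i, a i ^ q) ^ q⁻¹ + (∑' i, b i ^ q) ^ q⁻¹) ^ q := by
    rw [ENNReal.tsum_eq_iSup_sum]
    refine iSup_le fun s => ?_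
    have h1 := ENNReal.Lp_add_le s a b hq
    simp only [one_div] at h1
    have h2 := ENNReal.rpow_le_rpow h1 hq0.le
    rw [ENNReal.rpow_inv_rpow hq0.ne'] at h2
    refine h2.trans (ENNReal.rpow_le_rpow ?_ hq0.le)
    gcongr <;> exact ENNReal.sum_le_tsum s
  calc (∑' i, (a i + b i) ^ q) ^ q⁻¹
      ≤ (((∑' i, a i ^ q) ^ q⁻¹ + (∑' i, b i ^ q) ^ q⁻¹) ^ q) ^ q⁻¹ :=
        ENNReal.rpow_le_rpow key (by positivity)
    _ = _ := ENNReal.rpow_rpow_inv hq0.ne' _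

lemma weight_absorb {q : ℝ} (hq0 : (0:ℝ) < q) (c x : ℝ≥0∞) :
    c * x ^ q = (c ^ q⁻¹ * x) ^ q := by
  rw [ENNReal.mul_rpow_of_nonneg _ _ hq0.le, ENNReal.rpow_inv_rpow hq0.ne']

lemma tsum_wLp {ι : Type*} (w a b : ι → ℝ≥0∞) {q : ℝ} (hq : 1 ≤ q) :
    (∑' i, w i * (a i + b i) ^ q) ^ q⁻¹ ≤
      (∑' i, w i * a i ^ q) ^ q⁻¹ + (∑' i, w i * b i ^ q) ^ q⁻¹ := by
  have hq0 : (0:ℝ) < q := zero_lt_one.trans_le hq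
  simp only [weight_absorb hq0, mul_add]
  exact tsum_Lp_add_le' _ _ hq

lemma sum_wLp {κ : Type*} (s : Finset κ) (w a b : κ → ℝ≥0∞) {q : ℝ} (hq : 1 ≤ q) :
    (∑ k ∈ s, w k * (a k + b k) ^ q) ^ q⁻¹ ≤
      (∑ k ∈ s, w k * a k ^ q) ^ q⁻¹ + (∑ k ∈ s, w k * b k ^ q) ^ q⁻¹ := by
  have hq0 : (0:ℝ) < q := zero_lt_one.trans_le hq
  simp only [weight_absorb hq0, mul_add]
  have := ENNReal.Lp_add_le s (fun k => w k ^ q⁻¹ * a k) (fun k => w k ^ q⁻¹ * b k) hq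
  simpa [one_div] using this

lemma step_bound {idx κ₁ κ₂ : Type*} (w : idx → ℝ≥0∞) (s : Finset κ₁)
    (t : idx → Finset κ₂) (c : idx → κ₁ → κ₂ → ℝ≥0∞) (F G H : κ₁ → κ₂ → ℝ≥0∞)
    {q : ℝ} (hq : 1 ≤ q)
    (hH : ∀ I J, H I J ^ q⁻¹ ≤ F I J ^ q⁻¹ + G I J ^ q⁻¹) :
    (∑' N, w N * (∑ I ∈ s, ∑ J ∈ t N, c N I J * H I J) ^ 2) ^ (q * 2)⁻¹ ≤
      (∑' N, w N * (∑ I ∈ s, ∑ J ∈ t N, c N I J * F I J) ^ 2) ^ (q * 2)⁻¹ +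
      (∑' N, w N * (∑ I ∈ s, ∑ J ∈ t N, c N I J * G I J) ^ 2) ^ (q * 2)⁻¹ := by
  have hq0 : (0:ℝ) < q := zero_lt_one.trans_le hq
  have hQ : (1:ℝ) ≤ q * 2 := by nlinarith
  set X := fun N => ∑ I ∈ s, ∑ J ∈ t N, c N I J * F I J with hXdef
  set Y := fun N => ∑ I ∈ s, ∑ J ∈ t N, c N I J * G I J with hYdef
  have hXle : ∀ N, (∑ I ∈ s, ∑ J ∈ t N, c N I J * H I J) ≤ (X N ^ q⁻¹ + Y N ^ q⁻¹) ^ q := by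
    intro N
    have e1 : (∑ I ∈ s, ∑ J ∈ t N, c N I J * H I J) =
        ∑ k ∈ s ×ˢ t N, c N k.1 k.2 * H k.1 k.2 :=
      (Finset.sum_product' s (t N) (fun I J => c N I J * H I J)).symm
    have e2 : X N = ∑ k ∈ s ×ˢ t N, c N k.1 k.2 * F k.1 k.2 :=
      (Finset.sum_product' s (t N) (fun I J => c N I J * F I J)).symm
    have e3 : Y N = ∑ k ∈ s ×ˢ t N, c N k.1 k.2 * G k.1 k.2 :=
      (Finset.sum_product' s (t N) (fun I J => c N I J * G I J)).symm
    rw [e1, e2, e3]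
    calc ∑ k ∈ s ×ˢ t N, c N k.1 k.2 * H k.1 k.2
        ≤ ∑ k ∈ s ×ˢ t N, c N k.1 k.2 * (F k.1 k.2 ^ q⁻¹ + G k.1 k.2 ^ q⁻¹) ^ q := by
          refine Finset.sum_le_sum fun k _ => ?_
          gcongr
          calc H k.1 k.2 = (H k.1 k.2 ^ q⁻¹) ^ q := (ENNReal.rpow_inv_rpow hq0.ne' _).symm
            _ ≤ _ := ENNReal.rpow_le_rpow (hH k.1 k.2) hq0.le
      _ ≤ ((∑ k ∈ s ×ˢ t N, c N k.1 k.2 * F k.1 k.2) ^ q⁻¹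
            + (∑ k ∈ s ×ˢ t N, c N k.1 k.2 * G k.1 k.2) ^ q⁻¹) ^ q := by
          have h3 := ENNReal.rpow_le_rpow
            (sum_wLp (s ×ˢ t N) (fun k => c N k.1 k.2)
              (fun k => F k.1 k.2 ^ q⁻¹) (fun k => G k.1 k.2 ^ q⁻¹) hq) hq0.le
          simpa only [ENNReal.rpow_inv_rpow hq0.ne'] using h3
  have main : ∀ N, w N * (∑ I ∈ s, ∑ J ∈ t N, c N I J * H I J) ^ 2
      ≤ w N * (X N ^ q⁻¹ + Y N ^ q⁻¹) ^ (q * 2) := by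
    intro N
    have e : ((X N ^ q⁻¹ + Y N ^ q⁻¹) ^ q) ^ (2:ℕ) = (X N ^ q⁻¹ + Y N ^ q⁻¹) ^ (q * 2) := by
      rw [ENNReal.rpow_mul, ← ENNReal.rpow_natCast ((X N ^ q⁻¹ + Y N ^ q⁻¹) ^ q) 2]
      norm_num
    rw [← e]
    gcongr
    exact hXle N
  have e2 : ∀ x : ℝ≥0∞, (x ^ q⁻¹) ^ (q * 2) = x ^ (2:ℕ) := by
    intro x
    rw [← ENNReal.rpow_mul, ← mul_assoc, inv_mul_cancel₀ hq0.ne', one_mul,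
      ← ENNReal.rpow_natCast x 2]
    norm_num
  calc (∑' N, w N * (∑ I ∈ s, ∑ J ∈ t N, c N I J * H I J) ^ 2) ^ (q * 2)⁻¹
      ≤ (∑' N, w N * (X N ^ q⁻¹ + Y N ^ q⁻¹) ^ (q * 2)) ^ (q * 2)⁻¹ :=
        ENNReal.rpow_le_rpow (ENNReal.tsum_le_tsum main) (by positivity)
    _ ≤ (∑' N, w N * (X N ^ q⁻¹) ^ (q * 2)) ^ (q * 2)⁻¹
          + (∑' N, w N * (Y N ^ q⁻¹) ^ (q * 2)) ^ (q * 2)⁻¹ :=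
        tsum_wLp _ _ _ hQ
    _ = _ := by simp only [e2]; rfl


lemma rpow_two' (x : ℝ≥0∞) : x ^ (2:ℝ) = x ^ (2:ℕ) := by
  rw [← ENNReal.rpow_natCast x 2]; norm_num

lemma mul_sum_comm {κ : Type*} (C : ℝ≥0∞) (t : Finset κ) (u v : κ → ℝ≥0∞) :
    ∑ k ∈ t, u k * (C * v k) = C * ∑ k ∈ t, u k * v k := by
  rw [Finset.mul_sum]
  exact Finset.sum_congr rfl fun k _ => by ring

lemma hSem_smul {n : ℕ} (p : Fin n → ℂ) (ℏ : ℝ) (α : ℂ) {f : Fn n} (hf : ContDiff ℝ (⊤ : ℕ∞) f) :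
    ∀ (m ℓ : ℕ) (R S : Fin n → ℕ),
      hSem p ℏ m ℓ R S (fun z => α * f z)
        = (‖α‖₊ : ℝ≥0∞) ^ (2 ^ (m + 1)) * hSem p ℏ m ℓ R S f := by
  intro m
  induction m with
  | zero =>
    intro ℓ R S
    simp only [hSem, h0]
    rw [← ENNReal.tsum_mul_left]
    congr 1
    funext N
    rw [wD_smul R (N + S) α hf p, nnnorm_mul, ENNReal.coe_mul, mul_pow]
    ring
  | succ m ih =>
    intro ℓ R S
    by_cases hpar : ℓ % 2 = 0
    · simp only [hSem, hpar, if_true, ih]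
      rw [← ENNReal.tsum_mul_left]
      congr 1
      funext N
      simp only [mul_sum_comm]
      rw [← Finset.mul_sum, pow_succ 2 (m + 1), pow_mul]
      ring
    · simp only [hSem, hpar, if_false, ih]
      rw [← ENNReal.tsum_mul_left]
      congr 1
      funext N
      simp only [mul_sum_comm]
      rw [← Finset.mul_sum, pow_succ 2 (m + 1), pow_mul]
      ring

lemma hSem_tri {n : ℕ} (p : Fin n → ℂ) (ℏ : ℝ) {f g : Fn n}
    (hf : ContDiff ℝ (⊤ : ℕ∞) f) (hg : ContDiff ℝ (⊤ : ℕ∞) g) :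
    ∀ (m ℓ : ℕ) (R S : Fin n → ℕ),
      hSem p ℏ m ℓ R S (fun z => f z + g z) ^ (((2:ℝ) ^ (m + 1))⁻¹) ≤
        hSem p ℏ m ℓ R S f ^ (((2:ℝ) ^ (m + 1))⁻¹)
          + hSem p ℏ m ℓ R S g ^ (((2:ℝ) ^ (m + 1))⁻¹) := by
  intro m
  induction m with
  | zero =>
    intro ℓ R S
    have h0eq : ∀ h : Fn n, hSem p ℏ 0 ℓ R S h =
        ∑' N : Fin n → ℕ,
          (ENNReal.ofReal ((2*ℏ)^(mAbs R + mAbs S + mAbs N)) / (mFact N : ℝ≥0∞)) *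
            ((‖wD R (N + S) h p‖₊ : ℝ≥0∞)) ^ (2:ℕ) := fun h => rfl
    simp only [h0eq, zero_add, pow_one]
    have key := tsum_wLp (ι := (Fin n → ℕ))
      (fun N => ENNReal.ofReal ((2*ℏ)^(mAbs R + mAbs S + mAbs N)) / (mFact N : ℝ≥0∞))
      (fun N => (‖wD R (N + S) f p‖₊ : ℝ≥0∞))
      (fun N => (‖wD R (N + S) g p‖₊ : ℝ≥0∞)) (one_le_two (α := ℝ))
    simp only [rpow_two'] at key
    refine le_trans (ENNReal.rpow_le_rpow (ENNReal.tsum_le_tsum fun N => ?_)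
      (by positivity)) key
    gcongr
    rw [wD_add R (N + S) hf hg p]
    calc (‖wD R (N+S) f p + wD R (N+S) g p‖₊ : ℝ≥0∞)
        ≤ ((‖wD R (N+S) f p‖₊ + ‖wD R (N+S) g p‖₊ : ℝ≥0) : ℝ≥0∞) :=
          ENNReal.coe_le_coe.2 (nnnorm_add_le _ _)
      _ = _ := ENNReal.coe_add _ _
  | succ m ih =>
    intro ℓ R S
    have hq1 : (1:ℝ) ≤ (2:ℝ) ^ (m + 1) := one_le_pow₀ one_le_two
    have hexp : (((2:ℝ) ^ (m + 1 + 1))⁻¹) = (((2:ℝ) ^ (m + 1)) * 2)⁻¹ := by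
      rw [pow_succ]
    rw [hexp]
    by_cases hpar : ℓ % 2 = 0
    · simp only [hSem, hpar, if_true]
      exact step_bound (fun N => ((mFact N : ℝ≥0∞))⁻¹) (Finset.Iic R)
        (fun N => Finset.Iic (N + S))
        (fun N I J => ((mChoose R I * mChoose (N + S) J : ℕ) : ℝ≥0∞))
        (fun I J => hSem p ℏ m (ℓ / 2) I J f) (fun I J => hSem p ℏ m (ℓ / 2) I J g)
        (fun I J => hSem p ℏ m (ℓ / 2) I J (fun z => f z + g z)) hq1
        (fun I J => ih (ℓ / 2) I J)
    · simp only [hSem, hpar, if_false]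
      exact step_bound (fun N => ((mFact N : ℝ≥0∞))⁻¹) (Finset.Iic R)
        (fun N => Finset.Iic (N + S))
        (fun N I J => ((mChoose R I * mChoose (N + S) J : ℕ) : ℝ≥0∞))
        (fun I J => hSem p ℏ m ((ℓ - 1) / 2) J I f)
        (fun I J => hSem p ℏ m ((ℓ - 1) / 2) J I g)
        (fun I J => hSem p ℏ m ((ℓ - 1) / 2) J I (fun z => f z + g z)) hq1
        (fun I J => ih ((ℓ - 1) / 2) J I)

end AuxLemmas

/-- homogeneity and triangle inequality for the seminorms. -/
theorem seminorm_homogeneous_and_triangle {n : ℕ} (hn : 1 ≤ n)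
    (p : Fin n → ℂ) (ℏ : ℝ) (hℏ : 0 < ℏ)
    (f g : Fn n) (hf : ContDiff ℝ (⊤ : ℕ∞) f) (hg : ContDiff ℝ (⊤ : ℕ∞) g)
    (α : ℂ) (m ℓ : ℕ) (hℓ : ℓ < 2^m) (R S : Fin n → ℕ) :
    wNorm p ℏ m ℓ R S (fun z => α * f z) = (‖α‖₊ : ℝ≥0∞) * wNorm p ℏ m ℓ R S f ∧
    wNorm p ℏ m ℓ R S (fun z => f z + g z) ≤
      wNorm p ℏ m ℓ R S f + wNorm p ℏ m ℓ R S g := by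
  constructor
  · show hSem p ℏ m ℓ R S (fun z => α * f z) ^ (((2:ℝ)^(m+1))⁻¹) = _
    rw [hSem_smul p ℏ α hf m ℓ R S, ENNReal.mul_rpow_of_nonneg _ _ (by positivity)]
    congr 1
    rw [← ENNReal.rpow_natCast ((‖α‖₊ : ℝ≥0∞)) (2 ^ (m + 1)), ← ENNReal.rpow_mul,
      show (((2:ℕ) ^ (m + 1) : ℕ) : ℝ) = (2:ℝ) ^ (m + 1) by push_cast; ring,
      mul_inv_cancel₀ (by positivity), ENNReal.rpow_one]
  · exact hSem_tri p ℏ hf hg m ℓ R S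


end WickPaper
end
end

section
/- Let f ∈ C^∞(ℂⁿ) and suppose there exist constants a, b, c > 0 such that |∂^{|R|+|S|}f/(∂z̄^R ∂z^S)(p)| ≤ c·a^{|R|}·b^{|S|} for all multiindices R, S ∈ ℕⁿ. Then ‖f‖^{p,ℏ}_{m,ℓ,R,S} < ∞ for all m ∈ ℕ, 0 ≤ ℓ ≤ 2^m−1 and R, S ∈ ℕⁿ, i.e. f ∈ Ã_{p,ℏ}. In particular every polynomial in z₁,…,zₙ, z̄₁,…,z̄ₙ belongs to Ã_{p,ℏ}. -/
open scoped ENNReal NNReal BigOperators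
open Complex

noncomputable section

namespace WickPaper

/-! ### Auxiliary summability lemmas -/

lemma tsum_nat_exp (t : ℝ≥0) : (∑' k : ℕ, (t:ℝ≥0∞)^k / (Nat.factorial k : ℝ≥0∞)) ≠ ∞ := by
  have hs : Summable (fun k : ℕ => t^k / (Nat.factorial k : ℝ≥0)) := by
    rw [← NNReal.summable_coe]
    simpa [NNReal.coe_div, NNReal.coe_pow] using Real.summable_pow_div_factorial (t : ℝ)
  have h2 := ENNReal.tsum_coe_ne_top_iff_summable.mpr hs
  have : ∀ k : ℕ, (t:ℝ≥0∞)^k / (Nat.factorial k : ℝ≥0∞) = ((t^k / (Nat.factorial k : ℝ≥0) : ℝ≥0) : ℝ≥0∞) := by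
    intro k
    rw [ENNReal.coe_div (by positivity : ((Nat.factorial k : ℝ≥0)) ≠ 0)]
    push_cast
    rfl
  rwa [tsum_congr this]

lemma tsum_pi_exp (m : ℕ) (t : ℝ≥0) :
    (∑' N : Fin m → ℕ, (t:ℝ≥0∞)^(mAbs N) / (mFact N : ℝ≥0∞)) ≠ ∞ := by
  induction m with
  | zero =>
      rw [tsum_fintype]
      simp [mAbs, mFact]
  | succ m ih =>
      let e : ℕ × (Fin m → ℕ) ≃ (Fin (m+1) → ℕ) := Fin.consEquiv fun _ => ℕ
      rw [← e.tsum_eq]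
      have key : ∀ p : ℕ × (Fin m → ℕ),
          (t:ℝ≥0∞)^(mAbs (e p)) / (mFact (e p) : ℝ≥0∞)
          = ((t:ℝ≥0∞)^p.1 / (Nat.factorial p.1 : ℝ≥0∞)) *
            ((t:ℝ≥0∞)^(mAbs p.2) / (mFact p.2 : ℝ≥0∞)) := by
        rintro ⟨a, N⟩
        have hc : e (a, N) = Fin.cons a N := rfl
        have h1 : mAbs (e (a, N)) = a + mAbs N := by
          simp [mAbs, hc, Fin.sum_cons]
        have h2' : mFact (e (a, N)) = Nat.factorial a * mFact N := by
          rw [hc]; simp [mFact, Fin.prod_univ_succ]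
        have h2 : (mFact (e (a, N)) : ℝ≥0∞) = (Nat.factorial a : ℝ≥0∞) * (mFact N : ℝ≥0∞) := by
          rw [h2']; push_cast; ring
        rw [h1, h2, pow_add, ENNReal.div_eq_inv_mul, ENNReal.div_eq_inv_mul,
          ENNReal.div_eq_inv_mul, ENNReal.mul_inv (Or.inl (by positivity)) (Or.inl (by simp [Nat.factorial_ne_zero]))]
        ring
      rw [tsum_congr key, ENNReal.tsum_prod (f := fun a (N : Fin m → ℕ) =>
        ((t:ℝ≥0∞)^a / (Nat.factorial a : ℝ≥0∞)) * ((t:ℝ≥0∞)^(mAbs N) / (mFact N : ℝ≥0∞)))]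
      simp_rw [ENNReal.tsum_mul_left]
      rw [ENNReal.tsum_mul_right]
      exact ENNReal.mul_ne_top (tsum_nat_exp t) ih

lemma tsum_pi_exp' (m : ℕ) (u : ℝ≥0∞) (hu : u ≠ ∞) :
    (∑' N : Fin m → ℕ, u^(mAbs N) / (mFact N : ℝ≥0∞)) ≠ ∞ := by
  have : u = ((u.toNNReal : ℝ≥0) : ℝ≥0∞) := (ENNReal.coe_toNNReal hu).symm
  rw [this]
  exact tsum_pi_exp m u.toNNReal

lemma Iic_pi_eq {n : ℕ} (R : Fin n → ℕ) :
    Finset.Iic R = Fintype.piFinset (fun i => Finset.Iic (R i)) := by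
  ext I; simp [Fintype.mem_piFinset, Pi.le_def]

lemma sum_choose_one {r : ℕ} (K : ℝ≥0∞) :
    ∑ j ∈ Finset.Iic r, (Nat.choose r j : ℝ≥0∞) * K^j = (1+K)^r := by
  rw [show Finset.Iic r = Finset.range (r+1) by ext j; simp [Nat.lt_succ_iff]]
  rw [add_comm (1:ℝ≥0∞) K, add_pow]
  apply Finset.sum_congr rfl
  intro j hj; ring

lemma sum_Iic_choose {n : ℕ} (R : Fin n → ℕ) (K : ℝ≥0∞) :
    ∑ I ∈ Finset.Iic R, (mChoose R I : ℝ≥0∞) * K^(mAbs I) = (1+K)^(mAbs R) := by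
  rw [Iic_pi_eq]
  have : ∀ I ∈ Fintype.piFinset (fun i => Finset.Iic (R i)),
      (mChoose R I : ℝ≥0∞) * K^(mAbs I) = ∏ i, ((Nat.choose (R i) (I i) : ℝ≥0∞) * K^(I i)) := by
    intro I _
    rw [Finset.prod_mul_distrib, mChoose, mAbs]
    push_cast
    rw [Finset.prod_pow_eq_pow_sum]
  rw [Finset.sum_congr rfl this, ← Finset.prod_univ_sum (t := fun i => Finset.Iic (R i))
    (f := fun i j => (Nat.choose (R i) j : ℝ≥0∞) * K^j)]
  rw [mAbs, ← Finset.prod_pow_eq_pow_sum]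
  exact Finset.prod_congr rfl fun i _ => sum_choose_one K

lemma mAbs_add {n : ℕ} (N S : Fin n → ℕ) : mAbs (N + S) = mAbs N + mAbs S := by
  simp [mAbs, Finset.sum_add_distrib]

lemma hSem_bound {n : ℕ} (p : Fin n → ℂ) (ℏ : ℝ) (hℏ : 0 < ℏ)
    (g : Fn n) (a b c : ℝ) (ha : 0 < a) (hb : 0 < b) (hc : 0 < c)
    (hbound : ∀ R S : Fin n → ℕ, ‖wD S R g p‖ ≤ c * a^(mAbs R) * b^(mAbs S)) :
    ∀ m : ℕ, ∃ C K : ℝ≥0∞, C ≠ ∞ ∧ K ≠ ∞ ∧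
      ∀ (ℓ : ℕ) (R S : Fin n → ℕ), hSem p ℏ m ℓ R S g ≤ C * K^(mAbs R + mAbs S) := by
  intro m
  induction m with
  | zero =>
      set T : ℝ≥0∞ := ENNReal.ofReal (2*ℏ) with hT
      set A : ℝ≥0∞ := ENNReal.ofReal a with hA
      set B : ℝ≥0∞ := ENNReal.ofReal b with hB
      set Cc : ℝ≥0∞ := ENNReal.ofReal c with hCc
      have hTt : T ≠ ∞ := ENNReal.ofReal_ne_top
      have hAt : A ≠ ∞ := ENNReal.ofReal_ne_top
      have hBt : B ≠ ∞ := ENNReal.ofReal_ne_top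
      set K : ℝ≥0∞ := T * (1+A)^2 * (1+B)^2 with hK
      have hKt : K ≠ ∞ := by
        refine ENNReal.mul_ne_top (ENNReal.mul_ne_top hTt ?_) ?_
        · exact ENNReal.pow_ne_top (by simp [ENNReal.add_ne_top, hAt])
        · exact ENNReal.pow_ne_top (by simp [ENNReal.add_ne_top, hBt])
      set E : ℝ≥0∞ := ∑' N : Fin n → ℕ, (T*A^2)^(mAbs N) / (mFact N : ℝ≥0∞) with hE
      have hEt : E ≠ ∞ := tsum_pi_exp' n _ (ENNReal.mul_ne_top hTt (ENNReal.pow_ne_top hAt))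
      refine ⟨Cc^2 * E, K, ENNReal.mul_ne_top (ENNReal.pow_ne_top ENNReal.ofReal_ne_top) hEt, hKt, ?_⟩
      intro ℓ R S
      show h0 p ℏ R S g ≤ _
      have hterm : ∀ N : Fin n → ℕ,
          ENNReal.ofReal ((2*ℏ)^(mAbs R + mAbs S + mAbs N)) / (mFact N : ℝ≥0∞) *
            (‖wD R (N + S) g p‖₊ : ℝ≥0∞)^2
          ≤ (Cc^2 * ((T*B^2)^(mAbs R) * (T*A^2)^(mAbs S))) * ((T*A^2)^(mAbs N) / (mFact N : ℝ≥0∞)) := by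
        intro N
        have h1 : (‖wD R (N + S) g p‖₊ : ℝ≥0∞) ≤ Cc * A^(mAbs N + mAbs S) * B^(mAbs R) := by
          rw [show (‖wD R (N + S) g p‖₊ : ℝ≥0∞) = ENNReal.ofReal ‖wD R (N + S) g p‖ from (ofReal_norm _).symm]
          calc ENNReal.ofReal ‖wD R (N + S) g p‖
              ≤ ENNReal.ofReal (c * a^(mAbs (N+S)) * b^(mAbs R)) :=
                ENNReal.ofReal_le_ofReal (hbound (N+S) R)
            _ = Cc * A^(mAbs N + mAbs S) * B^(mAbs R) := by
                rw [mAbs_add, ENNReal.ofReal_mul (by positivity), ENNReal.ofReal_mul hc.le,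
                  ENNReal.ofReal_pow ha.le, ENNReal.ofReal_pow hb.le]
        have h2 : ENNReal.ofReal ((2*ℏ)^(mAbs R + mAbs S + mAbs N)) = T^(mAbs R + mAbs S + mAbs N) := by
          rw [ENNReal.ofReal_pow (by linarith)]
        rw [h2]
        calc T^(mAbs R + mAbs S + mAbs N) / (mFact N : ℝ≥0∞) * (‖wD R (N + S) g p‖₊ : ℝ≥0∞)^2
            ≤ T^(mAbs R + mAbs S + mAbs N) / (mFact N : ℝ≥0∞) *
              (Cc * A^(mAbs N + mAbs S) * B^(mAbs R))^2 := by
              exact mul_le_mul_right (pow_le_pow_left' h1 2) _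
          _ = (Cc^2 * ((T*B^2)^(mAbs R) * (T*A^2)^(mAbs S))) * ((T*A^2)^(mAbs N) / (mFact N : ℝ≥0∞)) := by
              rw [ENNReal.div_eq_inv_mul, ENNReal.div_eq_inv_mul]
              ring
      calc h0 p ℏ R S g
          ≤ ∑' N : Fin n → ℕ, (Cc^2 * ((T*B^2)^(mAbs R) * (T*A^2)^(mAbs S))) *
              ((T*A^2)^(mAbs N) / (mFact N : ℝ≥0∞)) := ENNReal.tsum_le_tsum hterm
        _ = (Cc^2 * ((T*B^2)^(mAbs R) * (T*A^2)^(mAbs S))) * E := ENNReal.tsum_mul_left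
        _ ≤ (Cc^2 * (K^(mAbs R) * K^(mAbs S))) * E := by
            have hTB : T*B^2 ≤ K := by
              rw [hK]
              calc T*B^2 ≤ T * ((1+B)^2) := by
                    exact mul_le_mul_right (pow_le_pow_left' (by simp) 2) T
                _ ≤ T * (1+A)^2 * (1+B)^2 := by
                    rw [mul_assoc]
                    refine mul_le_mul_right ?_ T
                    refine le_mul_of_one_le_left (zero_le) ?_
                    exact one_le_pow_of_one_le' (by simp) 2
            have hTA : T*A^2 ≤ K := by
              rw [hK]
              calc T*A^2 ≤ T * ((1+A)^2) := by
                    exact mul_le_mul_right (pow_le_pow_left' (by simp) 2) T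
                _ ≤ T * (1+A)^2 * (1+B)^2 := by
                    refine le_mul_of_one_le_right (zero_le) ?_
                    exact one_le_pow_of_one_le' (by simp) 2
            gcongr
        _ = (Cc^2 * E) * K^(mAbs R + mAbs S) := by rw [pow_add]; ring
  | succ m ih =>
      obtain ⟨C, K, hCt, hKt, hCK⟩ := ih
      set K' : ℝ≥0∞ := (1+K)^2 with hK'
      have hK't : K' ≠ ∞ := ENNReal.pow_ne_top (by simp [ENNReal.add_ne_top, hKt])
      set E : ℝ≥0∞ := ∑' N : Fin n → ℕ, K'^(mAbs N) / (mFact N : ℝ≥0∞) with hE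
      have hEt : E ≠ ∞ := tsum_pi_exp' n _ hK't
      refine ⟨C^2 * E, K', ENNReal.mul_ne_top (ENNReal.pow_ne_top hCt) hEt, hK't, ?_⟩
      intro ℓ R S
      -- the common bound for the inner double sum, valid for both parities
      have hdouble : ∀ (N : Fin n → ℕ) (hh : (Fin n → ℕ) → (Fin n → ℕ) → ℝ≥0∞),
          (∀ I J, hh I J ≤ C * K^(mAbs I + mAbs J)) →
          (∑ I ∈ Finset.Iic R, ∑ J ∈ Finset.Iic (N + S),
            ((mChoose R I * mChoose (N + S) J : ℕ) : ℝ≥0∞) * hh I J)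
          ≤ C * ((1+K)^(mAbs R) * (1+K)^(mAbs N + mAbs S)) := by
        intro N hh hhb
        calc (∑ I ∈ Finset.Iic R, ∑ J ∈ Finset.Iic (N + S),
              ((mChoose R I * mChoose (N + S) J : ℕ) : ℝ≥0∞) * hh I J)
            ≤ ∑ I ∈ Finset.Iic R, ∑ J ∈ Finset.Iic (N + S),
              ((mChoose R I : ℝ≥0∞) * K^(mAbs I)) * (((mChoose (N+S) J : ℝ≥0∞)) * K^(mAbs J)) * C := by
              refine Finset.sum_le_sum fun I _ => Finset.sum_le_sum fun J _ => ?_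
              calc ((mChoose R I * mChoose (N + S) J : ℕ) : ℝ≥0∞) * hh I J
                  ≤ ((mChoose R I * mChoose (N + S) J : ℕ) : ℝ≥0∞) * (C * K^(mAbs I + mAbs J)) :=
                    mul_le_mul_right (hhb I J) _
                _ = ((mChoose R I : ℝ≥0∞) * K^(mAbs I)) * (((mChoose (N+S) J : ℝ≥0∞)) * K^(mAbs J)) * C := by
                    push_cast
                    rw [pow_add]
                    ring
          _ = C * ((1+K)^(mAbs R) * (1+K)^(mAbs (N + S))) := by
              simp_rw [← Finset.sum_mul]
              rw [← Finset.sum_mul_sum, sum_Iic_choose, sum_Iic_choose]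
              ring
          _ = C * ((1+K)^(mAbs R) * (1+K)^(mAbs N + mAbs S)) := by rw [mAbs_add]
      have main : ∀ (hh : (Fin n → ℕ) → (Fin n → ℕ) → ℝ≥0∞),
          (∀ I J, hh I J ≤ C * K^(mAbs I + mAbs J)) →
          (∑' N : Fin n → ℕ, (mFact N : ℝ≥0∞)⁻¹ *
            (∑ I ∈ Finset.Iic R, ∑ J ∈ Finset.Iic (N + S),
              ((mChoose R I * mChoose (N + S) J : ℕ) : ℝ≥0∞) * hh I J) ^ 2)
          ≤ (C^2 * E) * K'^(mAbs R + mAbs S) := by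
        intro hh hhb
        calc (∑' N : Fin n → ℕ, (mFact N : ℝ≥0∞)⁻¹ *
              (∑ I ∈ Finset.Iic R, ∑ J ∈ Finset.Iic (N + S),
                ((mChoose R I * mChoose (N + S) J : ℕ) : ℝ≥0∞) * hh I J) ^ 2)
            ≤ ∑' N : Fin n → ℕ, (mFact N : ℝ≥0∞)⁻¹ *
              (C * ((1+K)^(mAbs R) * (1+K)^(mAbs N + mAbs S)))^2 := by
              refine ENNReal.tsum_le_tsum fun N => ?_
              exact mul_le_mul_right (pow_le_pow_left' (hdouble N hh hhb) 2) _
          _ = ∑' N : Fin n → ℕ, (C^2 * (K'^(mAbs R) * K'^(mAbs S))) * (K'^(mAbs N) / (mFact N : ℝ≥0∞)) := by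
              refine tsum_congr fun N => ?_
              rw [ENNReal.div_eq_inv_mul, hK']
              rw [mul_pow, mul_pow, pow_add, mul_pow, ← pow_mul, ← pow_mul, ← pow_mul,
                Nat.mul_comm (mAbs R) 2, Nat.mul_comm (mAbs S) 2, Nat.mul_comm (mAbs N) 2,
                pow_mul, pow_mul, pow_mul]
              ring
          _ = (C^2 * (K'^(mAbs R) * K'^(mAbs S))) * E := ENNReal.tsum_mul_left
          _ = (C^2 * E) * K'^(mAbs R + mAbs S) := by rw [pow_add]; ring
      show hSem p ℏ (m+1) ℓ R S g ≤ _
      rw [hSem]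
      split_ifs with hpar
      · exact main _ (fun I J => hCK _ I J)
      · refine main _ (fun I J => ?_)
        calc hSem p ℏ m ((ℓ-1)/2) J I g ≤ C * K^(mAbs J + mAbs I) := hCK _ J I
          _ = C * K^(mAbs I + mAbs J) := by rw [Nat.add_comm]

lemma mem_tA_of_bound {n : ℕ} (p : Fin n → ℂ) (ℏ : ℝ) (hℏ : 0 < ℏ)
    (g : Fn n) (hg : ContDiff ℝ (⊤ : ℕ∞) g) (a b c : ℝ) (ha : 0 < a) (hb : 0 < b) (hc : 0 < c)
    (hbound : ∀ R S : Fin n → ℕ, ‖wD S R g p‖ ≤ c * a^(mAbs R) * b^(mAbs S)) :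
    g ∈ tA p ℏ := by
  refine ⟨hg, fun m ℓ R S _ => ?_⟩
  obtain ⟨C, K, hCt, hKt, hCK⟩ := hSem_bound p ℏ hℏ g a b c ha hb hc hbound m
  have hfin : hSem p ℏ m ℓ R S g ≠ ∞ :=
    ne_top_of_le_ne_top (ENNReal.mul_ne_top hCt (ENNReal.pow_ne_top hKt)) (hCK ℓ R S)
  exact ENNReal.rpow_lt_top_of_nonneg (by positivity) hfin

/-! ### Wirtinger derivative basic rules -/

lemma wderivZ_congr {n : ℕ} (i : Fin n) {f g : Fn n} (h : f = g) : wderivZ i f = wderivZ i g := by rw [h]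

lemma wderivZ_const {n : ℕ} (j : Fin n) (c : ℂ) : wderivZ j (fun _ => c) = fun _ => 0 := by
  funext z
  have : fderiv ℝ (fun _ : Fin n → ℂ => c) z = 0 := fderiv_const_apply c
  simp [wderivZ, this]

lemma wderivZbar_const {n : ℕ} (j : Fin n) (c : ℂ) : wderivZbar j (fun _ => c) = fun _ => 0 := by
  funext z
  have : fderiv ℝ (fun _ : Fin n → ℂ => c) z = 0 := fderiv_const_apply c
  simp [wderivZbar, this]

lemma wderivZ_mul {n : ℕ} (j : Fin n) (f g : Fn n)
    (hf : Differentiable ℝ f) (hg : Differentiable ℝ g) :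
    wderivZ j (fun z => f z * g z) = fun z => wderivZ j f z * g z + f z * wderivZ j g z := by
  funext z
  simp only [wderivZ, fderiv_fun_mul (hf z) (hg z)]
  simp only [ContinuousLinearMap.add_apply, ContinuousLinearMap.smul_apply, smul_eq_mul]
  ring

lemma wderivZbar_mul {n : ℕ} (j : Fin n) (f g : Fn n)
    (hf : Differentiable ℝ f) (hg : Differentiable ℝ g) :
    wderivZbar j (fun z => f z * g z) = fun z => wderivZbar j f z * g z + f z * wderivZbar j g z := by
  funext z
  simp only [wderivZbar, fderiv_fun_mul (hf z) (hg z)]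
  simp only [ContinuousLinearMap.add_apply, ContinuousLinearMap.smul_apply, smul_eq_mul]
  ring

lemma fderiv_eval {n : ℕ} (i : Fin n) (z v : Fin n → ℂ) :
    fderiv ℝ (fun z : Fin n → ℂ => z i) z v = v i := by
  have : (fun z : Fin n → ℂ => z i) = ⇑(ContinuousLinearMap.proj (R := ℝ) (φ := fun _ : Fin n => ℂ) i) := rfl
  rw [this, ContinuousLinearMap.fderiv]
  rfl

lemma differentiable_eval {n : ℕ} (i : Fin n) : Differentiable ℝ (fun z : Fin n → ℂ => z i) := by
  have : (fun z : Fin n → ℂ => z i) = ⇑(ContinuousLinearMap.proj (R := ℝ) (φ := fun _ : Fin n => ℂ) i) := rfl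
  rw [this]
  exact (ContinuousLinearMap.proj (R := ℝ) (φ := fun _ : Fin n => ℂ) i).differentiable

lemma fderiv_conj_eval {n : ℕ} (i : Fin n) (z v : Fin n → ℂ) :
    fderiv ℝ (fun z : Fin n → ℂ => (starRingEnd ℂ) (z i)) z v = (starRingEnd ℂ) (v i) := by
  have : (fun z : Fin n → ℂ => (starRingEnd ℂ) (z i)) =
      ⇑((Complex.conjCLE.toContinuousLinearMap).comp
        (ContinuousLinearMap.proj (R := ℝ) (φ := fun _ : Fin n => ℂ) i)) := rfl
  rw [this, ContinuousLinearMap.fderiv]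
  rfl

lemma differentiable_conj_eval {n : ℕ} (i : Fin n) :
    Differentiable ℝ (fun z : Fin n → ℂ => (starRingEnd ℂ) (z i)) := by
  have : (fun z : Fin n → ℂ => (starRingEnd ℂ) (z i)) =
      ⇑((Complex.conjCLE.toContinuousLinearMap).comp
        (ContinuousLinearMap.proj (R := ℝ) (φ := fun _ : Fin n => ℂ) i)) := rfl
  rw [this]
  exact ContinuousLinearMap.differentiable _

lemma wderivZ_eval {n : ℕ} (j i : Fin n) :
    wderivZ j (fun z => z i) = fun _ => if i = j then 1 else 0 := by
  funext z
  simp only [wderivZ, fderiv_eval]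
  by_cases h : i = j
  · subst h
    simp [Pi.single_eq_same]
    try norm_num
  · simp [Pi.single_eq_of_ne h, h]

lemma wderivZbar_eval {n : ℕ} (j i : Fin n) :
    wderivZbar j (fun z => z i) = fun _ => 0 := by
  funext z
  simp only [wderivZbar, fderiv_eval]
  by_cases h : i = j
  · subst h
    simp [Pi.single_eq_same]
    try norm_num
  · simp [Pi.single_eq_of_ne h, h]

lemma wderivZ_conj_eval {n : ℕ} (j i : Fin n) :
    wderivZ j (fun z => (starRingEnd ℂ) (z i)) = fun _ => 0 := by
  funext z
  simp only [wderivZ, fderiv_conj_eval]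
  by_cases h : i = j
  · subst h
    simp [Pi.single_eq_same]
    try norm_num
  · simp [Pi.single_eq_of_ne h, h]

lemma wderivZbar_conj_eval {n : ℕ} (j i : Fin n) :
    wderivZbar j (fun z => (starRingEnd ℂ) (z i)) = fun _ => if i = j then 1 else 0 := by
  funext z
  simp only [wderivZbar, fderiv_conj_eval]
  by_cases h : i = j
  · subst h
    simp [Pi.single_eq_same]
    try norm_num
  · simp [Pi.single_eq_of_ne h, h]

/-! ### Monomials -/

def Mon {n : ℕ} (R S : Fin n → ℕ) : Fn n :=
  fun z => (∏ i, (z i)^(R i)) * (∏ i, ((starRingEnd ℂ) (z i))^(S i))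

lemma contDiff_mon {n : ℕ} (R S : Fin n → ℕ) : ContDiff ℝ (⊤ : ℕ∞) (Mon R S) := by
  apply ContDiff.mul
  · exact contDiff_prod fun i _ => by
      have h1 : ContDiff ℝ (⊤ : ℕ∞) (fun z : Fin n → ℂ => z i) :=
        (ContinuousLinearMap.proj (R := ℝ) (φ := fun _ : Fin n => ℂ) i).contDiff
      exact h1.pow (R i)
  · exact contDiff_prod fun i _ => by
      have h1 : ContDiff ℝ (⊤ : ℕ∞) (fun z : Fin n → ℂ => (starRingEnd ℂ) (z i)) :=
        ((Complex.conjCLE.toContinuousLinearMap).comp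
          (ContinuousLinearMap.proj (R := ℝ) (φ := fun _ : Fin n => ℂ) i)).contDiff
      exact h1.pow (S i)

lemma differentiable_mon {n : ℕ} (R S : Fin n → ℕ) : Differentiable ℝ (Mon R S) :=
  (contDiff_mon R S).differentiable (by simp)

lemma mon_succ {n : ℕ} (i : Fin n) (R S : Fin n → ℕ) :
    Mon (R + Pi.single i 1) S = fun z => z i * Mon R S z := by
  funext z
  simp only [Mon]
  have : (∏ j, (z j)^((R + Pi.single i 1 : Fin n → ℕ) j)) = z i * ∏ j, (z j)^(R j) := by
    have h1 : ∀ j, (z j)^((R + Pi.single i 1 : Fin n → ℕ) j) = (z j)^(R j) * (z j)^((Pi.single i 1 : Fin n → ℕ) j) := by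
      intro j; rw [Pi.add_apply, pow_add]
    rw [Finset.prod_congr rfl fun j _ => h1 j, Finset.prod_mul_distrib]
    have h2 : (∏ j, (z j)^((Pi.single i 1 : Fin n → ℕ) j)) = z i := by
      rw [Finset.prod_eq_single i (fun j _ hj => by rw [Pi.single_eq_of_ne hj, pow_zero])
        (fun h => absurd (Finset.mem_univ i) h)]
      rw [Pi.single_eq_same, pow_one]
    rw [h2]; ring
  rw [this]; ring

lemma mon_succ_bar {n : ℕ} (i : Fin n) (R S : Fin n → ℕ) :
    Mon R (S + Pi.single i 1) = fun z => (starRingEnd ℂ) (z i) * Mon R S z := by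
  funext z
  simp only [Mon]
  have : (∏ j, ((starRingEnd ℂ) (z j))^((S + Pi.single i 1 : Fin n → ℕ) j))
      = (starRingEnd ℂ) (z i) * ∏ j, ((starRingEnd ℂ) (z j))^(S j) := by
    have h1 : ∀ j, ((starRingEnd ℂ) (z j))^((S + Pi.single i 1 : Fin n → ℕ) j)
        = ((starRingEnd ℂ) (z j))^(S j) * ((starRingEnd ℂ) (z j))^((Pi.single i 1 : Fin n → ℕ) j) := by
      intro j; rw [Pi.add_apply, pow_add]
    rw [Finset.prod_congr rfl fun j _ => h1 j, Finset.prod_mul_distrib]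
    have h2 : (∏ j, ((starRingEnd ℂ) (z j))^((Pi.single i 1 : Fin n → ℕ) j)) = (starRingEnd ℂ) (z i) := by
      rw [Finset.prod_eq_single i (fun j _ hj => by rw [Pi.single_eq_of_ne hj, pow_zero])
        (fun h => absurd (Finset.mem_univ i) h)]
      rw [Pi.single_eq_same, pow_one]
    rw [h2]; ring
  rw [this]; ring

lemma mon_zero {n : ℕ} : Mon (0 : Fin n → ℕ) (0 : Fin n → ℕ) = fun _ => 1 := by
  funext z; simp [Mon]

lemma mAbs_single {n : ℕ} (i : Fin n) (q : ℕ) : mAbs (Pi.single i q : Fin n → ℕ) = q := by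
  simp [mAbs, Finset.sum_pi_single']

lemma exists_dec {n : ℕ} {S : Fin n → ℕ} (h : S ≠ 0) :
    ∃ i S', S = S' + Pi.single i 1 ∧ mAbs S' + 1 = mAbs S := by
  have : ∃ i, S i ≠ 0 := by
    by_contra h'; push_neg at h'; exact h (funext fun i => h' i)
  obtain ⟨i, hi⟩ := this
  refine ⟨i, S - Pi.single i 1, ?_, ?_⟩
  · funext x
    simp only [Pi.add_apply, Pi.sub_apply, Pi.single_apply]
    split_ifs with hx
    · subst hx; omega
    · omega
  · have h1 : S = (S - Pi.single i 1) + Pi.single i 1 := by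
      funext x
      simp only [Pi.add_apply, Pi.sub_apply, Pi.single_apply]
      split_ifs with hx
      · subst hx; omega
      · omega
    conv_rhs => rw [h1]
    rw [mAbs_add, mAbs_single]

lemma wderiv_mon_both {n : ℕ} : ∀ (k : ℕ) (R S : Fin n → ℕ), mAbs R + mAbs S = k → ∀ j : Fin n,
    wderivZ j (Mon R S) = (fun z => (R j : ℂ) * Mon (R - Pi.single j 1) S z) ∧
    wderivZbar j (Mon R S) = (fun z => (S j : ℂ) * Mon R (S - Pi.single j 1) z) := by
  intro k
  induction k using Nat.strong_induction_on with
  | _ k ih =>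
    intro R S hk j
    by_cases hR : R = 0
    · by_cases hS : S = 0
      · subst hR hS
        constructor
        · rw [mon_zero, wderivZ_const]
          funext z; simp
        · rw [mon_zero, wderivZbar_const]
          funext z; simp
      · obtain ⟨i, S', hdec, habs⟩ := exists_dec hS
        subst hR
        have hlt : mAbs (0 : Fin n → ℕ) + mAbs S' < k := by
          rw [← hk, hdec, mAbs_add, mAbs_single]; omega
        have ihs := ih _ hlt 0 S' rfl j
        have hmul : Mon (0 : Fin n → ℕ) S = fun z => (starRingEnd ℂ) (z i) * Mon 0 S' z := by
          rw [hdec, mon_succ_bar]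
        constructor
        · rw [hmul, wderivZ_mul j _ _ (differentiable_conj_eval i) (differentiable_mon 0 S'),
            wderivZ_conj_eval j i, ihs.1]
          funext z
          simp
        · rw [hmul, wderivZbar_mul j _ _ (differentiable_conj_eval i) (differentiable_mon 0 S'),
            wderivZbar_conj_eval j i, ihs.2]
          funext z
          by_cases hij : i = j
          · subst hij
            simp only [if_pos rfl, hdec, Pi.add_apply, Pi.single_eq_same]
            push_cast
            have e1 : (S' + Pi.single i 1 : Fin n → ℕ) - Pi.single i 1 = S' := by
              funext x; simp only [Pi.add_apply, Pi.sub_apply, Pi.single_apply]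
              split_ifs <;> omega
            rw [e1]
            by_cases h0 : S' i = 0
            · simp [h0]
            · have e2 : S' = (S' - Pi.single i 1) + Pi.single i 1 := by
                funext x; simp only [Pi.add_apply, Pi.sub_apply, Pi.single_apply]
                split_ifs with hx
                · subst hx; omega
                · omega
              have hz : Mon (0 : Fin n → ℕ) S' z = (starRingEnd ℂ) (z i) * Mon 0 (S' - Pi.single i 1) z := by
                conv_lhs => rw [e2, mon_succ_bar]
              rw [hz]
              ring
          · simp only [if_neg hij]
            have e1 : (S' + Pi.single i 1 : Fin n → ℕ) j = S' j := by
              simp [Pi.single_eq_of_ne (show j ≠ i from fun h => hij h.symm)]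
            have e2 : (S' + Pi.single i 1 : Fin n → ℕ) - Pi.single j 1
                = (S' - Pi.single j 1) + Pi.single i 1 := by
              funext x; simp only [Pi.add_apply, Pi.sub_apply, Pi.single_apply]
              split_ifs with h1 h2 <;>
                first
                  | omega
                  | exact absurd (show (i:Fin n) = j by rw [← h1]; exact h2) hij
            rw [hdec, e1, e2, mon_succ_bar]
            show (0:ℂ) * Mon (0:Fin n → ℕ) S' z + (starRingEnd ℂ) (z i) *
              ((S' j : ℂ) * Mon 0 (S' - Pi.single j 1) z)
              = (S' j : ℂ) * ((starRingEnd ℂ) (z i) * Mon 0 (S' - Pi.single j 1) z)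
            ring
    · obtain ⟨i, R', hdec, habs⟩ := exists_dec hR
      have hlt : mAbs R' + mAbs S < k := by rw [← hk]; omega
      have ihs := ih _ hlt R' S rfl j
      have hmul : Mon R S = fun z => z i * Mon R' S z := by
        rw [hdec, mon_succ]
      constructor
      · rw [hmul, wderivZ_mul j _ _ (differentiable_eval i) (differentiable_mon R' S),
          wderivZ_eval j i, ihs.1]
        funext z
        by_cases hij : i = j
        · subst hij
          simp only [if_pos rfl, hdec, Pi.add_apply, Pi.single_eq_same]
          push_cast
          have e1 : (R' + Pi.single i 1 : Fin n → ℕ) - Pi.single i 1 = R' := by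
            funext x; simp only [Pi.add_apply, Pi.sub_apply, Pi.single_apply]
            split_ifs <;> omega
          rw [e1]
          by_cases h0 : R' i = 0
          · simp [h0]
          · have e2 : R' = (R' - Pi.single i 1) + Pi.single i 1 := by
              funext x; simp only [Pi.add_apply, Pi.sub_apply, Pi.single_apply]
              split_ifs with hx
              · subst hx; omega
              · omega
            have hz : Mon R' S z = z i * Mon (R' - Pi.single i 1) S z := by
              conv_lhs => rw [e2, mon_succ]
            rw [hz]
            ring
        · simp only [if_neg hij]
          have e1 : (R' + Pi.single i 1 : Fin n → ℕ) j = R' j := by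
            simp [Pi.single_eq_of_ne (show j ≠ i from fun h => hij h.symm)]
          have e2 : (R' + Pi.single i 1 : Fin n → ℕ) - Pi.single j 1
              = (R' - Pi.single j 1) + Pi.single i 1 := by
            funext x; simp only [Pi.add_apply, Pi.sub_apply, Pi.single_apply]
            split_ifs with h1 h2 <;>
              first
                | omega
                | exact absurd (show (i:Fin n) = j by rw [← h1]; exact h2) hij
          rw [hdec, e1, e2, mon_succ]
          show (0:ℂ) * Mon R' S z + z i * ((R' j : ℂ) * Mon (R' - Pi.single j 1) S z)
            = (R' j : ℂ) * (z i * Mon (R' - Pi.single j 1) S z)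
          ring
      · rw [hmul, wderivZbar_mul j _ _ (differentiable_eval i) (differentiable_mon R' S),
          wderivZbar_eval j i, ihs.2]
        funext z
        have e1 : (R' + Pi.single i 1 : Fin n → ℕ) = R := hdec.symm
        rw [hdec, mon_succ]
        show (0:ℂ) * Mon R' S z + z i * ((S j : ℂ) * Mon R' (S - Pi.single j 1) z)
          = (S j : ℂ) * (z i * Mon R' (S - Pi.single j 1) z)
        ring

lemma wderivZ_mon {n : ℕ} (j : Fin n) (R S : Fin n → ℕ) :
    wderivZ j (Mon R S) = fun z => (R j : ℂ) * Mon (R - Pi.single j 1) S z :=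
  (wderiv_mon_both _ R S rfl j).1

lemma wderivZbar_mon {n : ℕ} (j : Fin n) (R S : Fin n → ℕ) :
    wderivZbar j (Mon R S) = fun z => (S j : ℂ) * Mon R (S - Pi.single j 1) z :=
  (wderiv_mon_both _ R S rfl j).2

/-! ### linear combinations of monomials -/

section Shape
variable {n : ℕ} {ι : Type*}

lemma wderivZ_finsum (j : Fin n) (t : Finset ι) (F : ι → Fn n)
    (hF : ∀ k, Differentiable ℝ (F k)) :
    wderivZ j (fun z => ∑ k ∈ t, F k z) = fun z => ∑ k ∈ t, wderivZ j (F k) z := by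
  funext z
  simp only [wderivZ]
  rw [fderiv_fun_sum (fun k _ => (hF k).differentiableAt)]
  simp only [ContinuousLinearMap.coe_sum', Finset.sum_apply]
  rw [← Finset.mul_sum, Finset.sum_sub_distrib, Finset.mul_sum]

lemma wderivZbar_finsum (j : Fin n) (t : Finset ι) (F : ι → Fn n)
    (hF : ∀ k, Differentiable ℝ (F k)) :
    wderivZbar j (fun z => ∑ k ∈ t, F k z) = fun z => ∑ k ∈ t, wderivZbar j (F k) z := by
  funext z
  simp only [wderivZbar]
  rw [fderiv_fun_sum (fun k _ => (hF k).differentiableAt)]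
  simp only [ContinuousLinearMap.coe_sum', Finset.sum_apply]
  rw [← Finset.mul_sum, Finset.sum_add_distrib, Finset.mul_sum]

lemma wderivZ_const_mul (j : Fin n) (c : ℂ) (F : Fn n) (hF : Differentiable ℝ F) :
    wderivZ j (fun z => c * F z) = fun z => c * wderivZ j F z := by
  funext z
  simp only [wderivZ]
  rw [fderiv_const_mul hF.differentiableAt c]
  simp only [ContinuousLinearMap.smul_apply, smul_eq_mul]
  ring

lemma wderivZbar_const_mul (j : Fin n) (c : ℂ) (F : Fn n) (hF : Differentiable ℝ F) :
    wderivZbar j (fun z => c * F z) = fun z => c * wderivZbar j F z := by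
  funext z
  simp only [wderivZbar]
  rw [fderiv_const_mul hF.differentiableAt c]
  simp only [ContinuousLinearMap.smul_apply, smul_eq_mul]
  ring

lemma wderivZ_shape (j : Fin n) (t : Finset ι) (cf : ι → ℂ) (A B : ι → (Fin n → ℕ)) :
    wderivZ j (fun z => ∑ k ∈ t, cf k * Mon (A k) (B k) z)
      = fun z => ∑ k ∈ t, (cf k * (A k j : ℂ)) * Mon (A k - Pi.single j 1) (B k) z := by
  rw [wderivZ_finsum j t _ (fun k => (differentiable_mon (A k) (B k)).const_mul (cf k))]
  funext z
  refine Finset.sum_congr rfl fun k _ => ?_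
  rw [wderivZ_const_mul j (cf k) _ (differentiable_mon (A k) (B k)), wderivZ_mon]
  ring

lemma wderivZbar_shape (j : Fin n) (t : Finset ι) (cf : ι → ℂ) (A B : ι → (Fin n → ℕ)) :
    wderivZbar j (fun z => ∑ k ∈ t, cf k * Mon (A k) (B k) z)
      = fun z => ∑ k ∈ t, (cf k * (B k j : ℂ)) * Mon (A k) (B k - Pi.single j 1) z := by
  rw [wderivZbar_finsum j t _ (fun k => (differentiable_mon (A k) (B k)).const_mul (cf k))]
  funext z
  refine Finset.sum_congr rfl fun k _ => ?_
  rw [wderivZbar_const_mul j (cf k) _ (differentiable_mon (A k) (B k)), wderivZbar_mon]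
  ring

lemma iter_wderivZ_shape (j : Fin n) (q : ℕ) (t : Finset ι) (cf : ι → ℂ) (A B : ι → (Fin n → ℕ)) :
    (wderivZ j)^[q] (fun z => ∑ k ∈ t, cf k * Mon (A k) (B k) z)
      = fun z => ∑ k ∈ t, (cf k * (Nat.descFactorial (A k j) q : ℂ))
          * Mon (A k - Pi.single j q) (B k) z := by
  induction q with
  | zero => funext z; simp
  | succ q ihq =>
      rw [Function.iterate_succ_apply', ihq, wderivZ_shape]
      funext z
      refine Finset.sum_congr rfl fun k _ => ?_
      have h1 : (A k - Pi.single j q : Fin n → ℕ) j = A k j - q := by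
        simp [Pi.sub_apply, Pi.single_eq_same]
      have h2 : (A k - Pi.single j q : Fin n → ℕ) - Pi.single j 1 = A k - Pi.single j (q+1) := by
        rw [tsub_tsub, ← Pi.single_add]
      rw [h1, h2, Nat.descFactorial_succ]
      push_cast
      ring

lemma iter_wderivZbar_shape (j : Fin n) (q : ℕ) (t : Finset ι) (cf : ι → ℂ) (A B : ι → (Fin n → ℕ)) :
    (wderivZbar j)^[q] (fun z => ∑ k ∈ t, cf k * Mon (A k) (B k) z)
      = fun z => ∑ k ∈ t, (cf k * (Nat.descFactorial (B k j) q : ℂ))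
          * Mon (A k) (B k - Pi.single j q) z := by
  induction q with
  | zero => funext z; simp
  | succ q ihq =>
      rw [Function.iterate_succ_apply', ihq, wderivZbar_shape]
      funext z
      refine Finset.sum_congr rfl fun k _ => ?_
      have h1 : (B k - Pi.single j q : Fin n → ℕ) j = B k j - q := by
        simp [Pi.sub_apply, Pi.single_eq_same]
      have h2 : (B k - Pi.single j q : Fin n → ℕ) - Pi.single j 1 = B k - Pi.single j (q+1) := by
        rw [tsub_tsub, ← Pi.single_add]
      rw [h1, h2, Nat.descFactorial_succ]
      push_cast
      ring

/-- partial multi-index built from a list -/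
def sσ (L : List (Fin n)) (Q : Fin n → ℕ) : Fin n → ℕ := fun x => if x ∈ L then Q x else 0

lemma sσ_nil (Q : Fin n → ℕ) : sσ [] Q = 0 := by
  funext x; simp [sσ]

lemma sσ_cons {j : Fin n} {L : List (Fin n)} (hj : j ∉ L) (Q : Fin n → ℕ) :
    sσ (j :: L) Q = sσ L Q + Pi.single j (Q j) := by
  funext x
  by_cases hx : x = j
  · subst hx
    simp [sσ, List.mem_cons, hj, Pi.single_eq_same]
  · simp [sσ, List.mem_cons, hx, Pi.single_eq_of_ne hx]

lemma sσ_apply_not_mem {j : Fin n} {L : List (Fin n)} (hj : j ∉ L) (Q : Fin n → ℕ) :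
    sσ L Q j = 0 := by simp [sσ, hj]

lemma foldr_wderivZ_shape (Q : Fin n → ℕ) :
    ∀ (L : List (Fin n)), L.Nodup → ∀ (t : Finset ι) (cf : ι → ℂ) (A B : ι → (Fin n → ℕ)),
    L.foldr (fun i g => (wderivZ i)^[Q i] g) (fun z => ∑ k ∈ t, cf k * Mon (A k) (B k) z)
      = fun z => ∑ k ∈ t,
          (cf k * ((L.map fun j => (Nat.descFactorial (A k j) (Q j) : ℂ)).prod))
            * Mon (A k - sσ L Q) (B k) z := by
  intro L
  induction L with
  | nil =>
      intro _ t cf A B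
      funext z
      simp [sσ_nil]
  | cons j L ihL =>
      intro hnd t cf A B
      obtain ⟨hj, hnd'⟩ := List.nodup_cons.mp hnd
      show (wderivZ j)^[Q j] (L.foldr (fun i g => (wderivZ i)^[Q i] g) _) = _
      rw [ihL hnd' t cf A B, iter_wderivZ_shape]
      funext z
      refine Finset.sum_congr rfl fun k _ => ?_
      have h1 : (A k - sσ L Q : Fin n → ℕ) j = A k j := by
        simp [Pi.sub_apply, sσ_apply_not_mem hj]
      have h2 : (A k - sσ L Q : Fin n → ℕ) - Pi.single j (Q j) = A k - sσ (j :: L) Q := by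
        rw [tsub_tsub, ← sσ_cons hj]
      rw [h1, h2, List.map_cons, List.prod_cons]
      ring

lemma foldr_wderivZbar_shape (Q : Fin n → ℕ) :
    ∀ (L : List (Fin n)), L.Nodup → ∀ (t : Finset ι) (cf : ι → ℂ) (A B : ι → (Fin n → ℕ)),
    L.foldr (fun i g => (wderivZbar i)^[Q i] g) (fun z => ∑ k ∈ t, cf k * Mon (A k) (B k) z)
      = fun z => ∑ k ∈ t,
          (cf k * ((L.map fun j => (Nat.descFactorial (B k j) (Q j) : ℂ)).prod))
            * Mon (A k) (B k - sσ L Q) z := by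
  intro L
  induction L with
  | nil =>
      intro _ t cf A B
      funext z
      simp [sσ_nil]
  | cons j L ihL =>
      intro hnd t cf A B
      obtain ⟨hj, hnd'⟩ := List.nodup_cons.mp hnd
      show (wderivZbar j)^[Q j] (L.foldr (fun i g => (wderivZbar i)^[Q i] g) _) = _
      rw [ihL hnd' t cf A B, iter_wderivZbar_shape]
      funext z
      refine Finset.sum_congr rfl fun k _ => ?_
      have h1 : (B k - sσ L Q : Fin n → ℕ) j = B k j := by
        simp [Pi.sub_apply, sσ_apply_not_mem hj]
      have h2 : (B k - sσ L Q : Fin n → ℕ) - Pi.single j (Q j) = B k - sσ (j :: L) Q := by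
        rw [tsub_tsub, ← sσ_cons hj]
      rw [h1, h2, List.map_cons, List.prod_cons]
      ring

lemma sσ_finRange (Q : Fin n → ℕ) : sσ (List.finRange n) Q = Q := by
  funext x; simp [sσ, List.mem_finRange]

/-- multi-index descending factorial -/
def mDF {n : ℕ} (a Q : Fin n → ℕ) : ℕ := ∏ i, Nat.descFactorial (a i) (Q i)

lemma wIterZ_shape (Q : Fin n → ℕ) (t : Finset ι) (cf : ι → ℂ) (A B : ι → (Fin n → ℕ)) :
    wIterZ Q (fun z => ∑ k ∈ t, cf k * Mon (A k) (B k) z)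
      = fun z => ∑ k ∈ t, (cf k * (mDF (A k) Q : ℂ)) * Mon (A k - Q) (B k) z := by
  show (List.finRange n).foldr _ _ = _
  rw [foldr_wderivZ_shape Q (List.finRange n) (List.nodup_finRange n) t cf A B]
  funext z
  refine Finset.sum_congr rfl fun k _ => ?_
  rw [sσ_finRange]
  congr 2
  rw [mDF, Nat.cast_prod, Fin.prod_univ_def]

lemma wIterZbar_shape (Q : Fin n → ℕ) (t : Finset ι) (cf : ι → ℂ) (A B : ι → (Fin n → ℕ)) :
    wIterZbar Q (fun z => ∑ k ∈ t, cf k * Mon (A k) (B k) z)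
      = fun z => ∑ k ∈ t, (cf k * (mDF (B k) Q : ℂ)) * Mon (A k) (B k - Q) z := by
  show (List.finRange n).foldr _ _ = _
  rw [foldr_wderivZbar_shape Q (List.finRange n) (List.nodup_finRange n) t cf A B]
  funext z
  refine Finset.sum_congr rfl fun k _ => ?_
  rw [sσ_finRange]
  congr 2
  rw [mDF, Nat.cast_prod, Fin.prod_univ_def]

lemma wD_shape (Q1 Q2 : Fin n → ℕ) (t : Finset ι) (cf : ι → ℂ) (A B : ι → (Fin n → ℕ)) :
    wD Q1 Q2 (fun z => ∑ k ∈ t, cf k * Mon (A k) (B k) z)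
      = fun z => ∑ k ∈ t, ((cf k * (mDF (B k) Q2 : ℂ)) * (mDF (A k) Q1 : ℂ))
          * Mon (A k - Q1) (B k - Q2) z := by
  show wIterZ Q1 (wIterZbar Q2 _) = _
  rw [wIterZbar_shape, wIterZ_shape]

end Shape

lemma descFactorial_le_factorial (m k : ℕ) : m.descFactorial k ≤ m.factorial := by
  rcases le_or_gt k m with h | h
  · calc m.descFactorial k ≤ (m-k).factorial * m.descFactorial k :=
        Nat.le_mul_of_pos_left _ (Nat.factorial_pos _)
      _ = m.factorial := Nat.factorial_mul_descFactorial h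
  · rw [Nat.descFactorial_eq_zero_iff_lt.mpr h]; exact Nat.zero_le _

lemma mDF_le_mFact {n : ℕ} (a Q : Fin n → ℕ) : mDF a Q ≤ mFact a := by
  exact Finset.prod_le_prod' fun i _ => descFactorial_le_factorial (a i) (Q i)

lemma mon_norm_bound {n : ℕ} (p : Fin n → ℂ) (A' B' A B : Fin n → ℕ)
    (hA : ∀ i, A' i ≤ A i) (hB : ∀ i, B' i ≤ B i) :
    ‖Mon A' B' p‖ ≤ ∏ i, (1+‖p i‖)^(A i + B i) := by
  rw [Mon, norm_mul, norm_prod, norm_prod]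
  have h1 : ∀ i, ‖(p i)^(A' i)‖ = ‖p i‖^(A' i) := fun i => norm_pow _ _
  have h2 : ∀ i, ‖((starRingEnd ℂ) (p i))^(B' i)‖ = ‖p i‖^(B' i) := by
    intro i; rw [norm_pow, RCLike.norm_conj]
  rw [Finset.prod_congr rfl fun i _ => h1 i, Finset.prod_congr rfl fun i _ => h2 i,
    ← Finset.prod_mul_distrib]
  refine Finset.prod_le_prod (fun i _ => by positivity) fun i _ => ?_
  calc ‖p i‖^(A' i) * ‖p i‖^(B' i) = ‖p i‖^(A' i + B' i) := (pow_add _ _ _).symm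
    _ ≤ (1+‖p i‖)^(A' i + B' i) := by
        exact pow_le_pow_left₀ (norm_nonneg _) (by linarith [norm_nonneg (p i)]) _
    _ ≤ (1+‖p i‖)^(A i + B i) := by
        refine pow_le_pow_right₀ (by linarith [norm_nonneg (p i)]) ?_
        exact Nat.add_le_add (hA i) (hB i)

lemma poly_wD_bound {n : ℕ} (p : Fin n → ℂ) (d : ((Fin n → ℕ) × (Fin n → ℕ)) →₀ ℂ) :
    ∀ R S : Fin n → ℕ,
      ‖wD S R (fun z => ∑ RS ∈ d.support, d RS * Mon RS.1 RS.2 z) p‖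
      ≤ ∑ RS ∈ d.support, ‖d RS‖ *
          ((mFact RS.1 * mFact RS.2 : ℕ) * ∏ i, (1+‖p i‖)^(RS.1 i + RS.2 i)) := by
  intro R S
  rw [wD_shape S R d.support d (fun k => k.1) (fun k => k.2)]
  refine le_trans (norm_sum_le _ _) (Finset.sum_le_sum fun RS _ => ?_)
  rw [norm_mul, norm_mul, norm_mul]
  have hd1 : ‖((mDF RS.2 R : ℕ) : ℂ)‖ ≤ (mFact RS.2 : ℝ) := by
    rw [Complex.norm_natCast]
    exact_mod_cast mDF_le_mFact RS.2 R
  have hd2 : ‖((mDF RS.1 S : ℕ) : ℂ)‖ ≤ (mFact RS.1 : ℝ) := by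
    rw [Complex.norm_natCast]
    exact_mod_cast mDF_le_mFact RS.1 S
  have hmon : ‖Mon (RS.1 - S) (RS.2 - R) p‖ ≤ ∏ i, (1+‖p i‖)^(RS.1 i + RS.2 i) :=
    mon_norm_bound p _ _ RS.1 RS.2 (fun i => Nat.sub_le _ _) (fun i => Nat.sub_le _ _)
  calc ‖d RS‖ * ‖((mDF RS.2 R : ℕ) : ℂ)‖ * ‖((mDF RS.1 S : ℕ) : ℂ)‖ * ‖Mon (RS.1 - S) (RS.2 - R) p‖
      ≤ ‖d RS‖ * (mFact RS.2 : ℝ) * (mFact RS.1 : ℝ) * (∏ i, (1+‖p i‖)^(RS.1 i + RS.2 i)) := by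
        have h0 : (0:ℝ) ≤ ∏ i, (1+‖p i‖)^(RS.1 i + RS.2 i) :=
          Finset.prod_nonneg fun i _ => by positivity
        gcongr
    _ = ‖d RS‖ * ((mFact RS.1 * mFact RS.2 : ℕ) * ∏ i, (1+‖p i‖)^(RS.1 i + RS.2 i)) := by
        push_cast; ring

/-- functions with factorial-free growth of Taylor coefficients
belong to Ã_{p,ℏ}; in particular polynomials do. -/
theorem estimate_implies_mem_tA {n : ℕ} (hn : 1 ≤ n)
    (p : Fin n → ℂ) (ℏ : ℝ) (hℏ : 0 < ℏ)
    (f : Fn n) (hf : ContDiff ℝ (⊤ : ℕ∞) f)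
    (a b c : ℝ) (ha : 0 < a) (hb : 0 < b) (hc : 0 < c)
    (hbound : ∀ R S : Fin n → ℕ, ‖wD S R f p‖ ≤ c * a^(mAbs R) * b^(mAbs S)) :
    f ∈ tA p ℏ ∧
    ∀ d : ((Fin n → ℕ) × (Fin n → ℕ)) →₀ ℂ,
      (fun z => ∑ RS ∈ d.support,
        d RS * (∏ i, (z i)^(RS.1 i)) * (∏ i, ((starRingEnd ℂ) (z i))^(RS.2 i))) ∈ tA p ℏ := by
  constructor
  · exact mem_tA_of_bound p ℏ hℏ f hf a b c ha hb hc hbound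
  · intro d
    have hgeq : (fun z => ∑ RS ∈ d.support,
          d RS * (∏ i, (z i)^(RS.1 i)) * (∏ i, ((starRingEnd ℂ) (z i))^(RS.2 i)))
        = (fun z => ∑ RS ∈ d.support, d RS * Mon RS.1 RS.2 z) := by
      funext z
      refine Finset.sum_congr rfl fun RS _ => ?_
      rw [Mon]; ring
    rw [hgeq]
    have hsumnn : (0:ℝ) ≤ ∑ RS ∈ d.support, ‖d RS‖ *
        ((mFact RS.1 * mFact RS.2 : ℕ) * ∏ i, (1+‖p i‖)^(RS.1 i + RS.2 i)) := by
      refine Finset.sum_nonneg fun RS _ => ?_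
      have h1 : (0:ℝ) ≤ ∏ i, (1+‖p i‖)^(RS.1 i + RS.2 i) :=
        Finset.prod_nonneg fun i _ => by positivity
      have h2 : (0:ℝ) ≤ ((mFact RS.1 * mFact RS.2 : ℕ) : ℝ) := Nat.cast_nonneg _
      have h3 : (0:ℝ) ≤ ‖d RS‖ := norm_nonneg _
      positivity
    set c0 : ℝ := 1 + ∑ RS ∈ d.support, ‖d RS‖ *
        ((mFact RS.1 * mFact RS.2 : ℕ) * ∏ i, (1+‖p i‖)^(RS.1 i + RS.2 i)) with hc0
    have hc0pos : 0 < c0 := by rw [hc0]; linarith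
    refine mem_tA_of_bound p ℏ hℏ _ ?_ 1 1 c0 one_pos one_pos hc0pos ?_
    · exact ContDiff.sum fun RS _ => contDiff_const.mul (contDiff_mon RS.1 RS.2)
    · intro R S
      simp only [one_pow, mul_one]
      calc ‖wD S R (fun z => ∑ RS ∈ d.support, d RS * Mon RS.1 RS.2 z) p‖
          ≤ ∑ RS ∈ d.support, ‖d RS‖ *
            ((mFact RS.1 * mFact RS.2 : ℕ) * ∏ i, (1+‖p i‖)^(RS.1 i + RS.2 i)) :=
            poly_wD_bound p d R S
        _ ≤ c0 := by rw [hc0]; linarith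

end WickPaper
end
end
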